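/- Let j ≥ 0 be an integer and let w : ℝ² → ℝ be continuously differentiable. Suppose u₀ ∈ P_j satisfies ∫_K (w − u₀) p dx dy = 0 for every p ∈ P_j; suppose for each m ∈ {1,2,3,4} that u_{b,m} is a polynomial of degree ≤ j+1 in the coordinate running along F_m with ∫_{F_m} (w − u_{b,m}) p ds = 0 for every univariate polynomial p of degree ≤ j+1; and suppose G ∈ BDM_{j+1}(K) satisfies ∫_K G·q dx dy = −∫_K u₀ (div q) dx dy + Σ_{m=1}^{4} ∫_{F_m} u_{b,m} (q·n_m) ds for every q ∈ BDM_{j+1}(K). Then ∫_K (G − ∇w)·q dx dy = 0 for every q ∈ BDM_{j+1}(K); that is, G is the L² projection of ∇w onto BDM_{j+1}(K). -/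

import Mathlib

/-!
Green's formula on `K` gives `∫_K ∇w·q = -∫_K w div q + Σₘ ∫_{F_m} w (q·n_m)` for every polynomial
field `q`. If `q ∈ BDM_{j+1}(K)`, then `div q ∈ P_j`, because `div ∘ curl = 0`, and on each edge
`q·n_m` is a polynomial of degree `≤ j+1` in the coordinate along the edge, because `curl` of
`x^{j+2} y` (resp. `x y^{j+2}`) has first (resp. second) component of degree `≤ j+1` in `y`
(resp. `x`). Hence the projection properties of `u₀` and of the `u_{b,m}` allow replacing `w` by
them, which turns the right-hand side into the one defining `G`.
-/

open MeasureTheory MvPolynomial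

noncomputable section

/-- Real polynomials in two variables. -/
abbrev Poly2 := MvPolynomial (Fin 2) ℝ

/-- Evaluate a two-variable polynomial at `(x, y)`. -/
def evalP (p : Poly2) (x y : ℝ) : ℝ := MvPolynomial.eval ![x, y] p

/-- `P_r`: total degree `≤ r`. -/
def memP (r : ℕ) (p : Poly2) : Prop := p.totalDegree ≤ r

/-- The divergence of a polynomial vector field. -/
def divP (q : Poly2 × Poly2) : Poly2 := pderiv 0 q.1 + pderiv 1 q.2

/-- The curl of a scalar polynomial: `curl φ = (−∂φ/∂y, ∂φ/∂x)`. -/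
def curlP (φ : Poly2) : Poly2 × Poly2 := (-(pderiv 1 φ), pderiv 0 φ)

/-- The Brezzi–Douglas–Marini space
`BDM_{j+1}(K) = (P_{j+1})² + span{curl (x^{j+2} y), curl (x y^{j+2})}`. -/
def memBDM (j : ℕ) (q : Poly2 × Poly2) : Prop :=
  ∃ (p₁ p₂ : Poly2) (a b : ℝ), memP (j+1) p₁ ∧ memP (j+1) p₂ ∧
    q.1 = p₁ + a • (curlP (X 0 ^ (j+2) * X 1)).1 + b • (curlP (X 0 * X 1 ^ (j+2))).1 ∧
    q.2 = p₂ + a • (curlP (X 0 ^ (j+2) * X 1)).2 + b • (curlP (X 0 * X 1 ^ (j+2))).2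

namespace MvPolynomial

variable {σ R : Type*} [CommSemiring R]

theorem pderiv_pderiv_comm (i k : σ) (p : MvPolynomial σ R) :
    pderiv i (pderiv k p) = pderiv k (pderiv i p) := by
  classical
  induction p using MvPolynomial.induction_on with
  | C a => simp
  | add p q hp hq => simp [hp, hq]
  | mul_X p m hp =>
      simp only [Derivation.leibniz, pderiv_X, map_add, smul_eq_mul, hp, Pi.single_apply]
      split_ifs <;> simp <;> ring

theorem add_single_mem_support_of_mem_support_pderiv {i : σ} {p : MvPolynomial σ R}
    {m : σ →₀ ℕ} (hm : m ∈ (pderiv i p).support) : m + Finsupp.single i 1 ∈ p.support := by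
  rw [mem_support_iff, coeff_pderiv] at hm
  exact mem_support_iff.2 (left_ne_zero_of_mul hm)

theorem totalDegree_pderiv_le (i : σ) (p : MvPolynomial σ R) :
    (pderiv i p).totalDegree ≤ p.totalDegree - 1 :=
  Finset.sup_le fun m hm => by
    have := le_totalDegree (add_single_mem_support_of_mem_support_pderiv hm)
    rw [Finsupp.sum_add_index' (fun _ => rfl) (fun _ _ _ => rfl),
      Finsupp.sum_single_index rfl] at this
    omega

theorem degreeOf_pderiv_le (i : σ) (p : MvPolynomial σ R) :
    (pderiv i p).degreeOf i ≤ p.degreeOf i - 1 :=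
  degreeOf_le_iff.2 fun m hm => by
    have := monomial_le_degreeOf i (add_single_mem_support_of_mem_support_pderiv hm)
    simp only [Finsupp.add_apply, Finsupp.single_eq_same] at this
    omega

theorem degreeOf_smul_le (i : σ) (a : R) (p : MvPolynomial σ R) :
    (a • p).degreeOf i ≤ p.degreeOf i :=
  degreeOf_le_iff.2 fun _ hm => monomial_le_degreeOf i (support_smul hm)

theorem natDegree_aeval_le_degreeOf (i : σ) (g : σ → Polynomial R)
    (hgi : (g i).natDegree ≤ 1) (hg : ∀ k ≠ i, (g k).natDegree = 0) (p : MvPolynomial σ R) :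
    (aeval g p).natDegree ≤ p.degreeOf i := by
  classical
  conv_lhs => rw [p.as_sum, map_sum]
  refine Polynomial.natDegree_sum_le_of_forall_le _ _ fun s hs => ?_
  rw [aeval_monomial]
  calc _ ≤ (s.prod fun k e => g k ^ e).natDegree := Polynomial.natDegree_C_mul_le _ _
    _ ≤ ∑ k ∈ s.support, (g k ^ s k).natDegree := Polynomial.natDegree_prod_le _ _
    _ ≤ ∑ k ∈ s.support, if k = i then s k else 0 := Finset.sum_le_sum fun k _ => by
        refine Polynomial.natDegree_pow_le.trans ?_
        split_ifs with hk
        · subst hk; simpa using Nat.mul_le_mul_left (s k) hgi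
        · simp [hg k hk]
    _ ≤ s i := by rw [Finset.sum_ite_eq']; split_ifs <;> simp
    _ ≤ p.degreeOf i := monomial_le_degreeOf i hs

theorem polynomial_eval_aeval (g : σ → Polynomial R) (t : R) (p : MvPolynomial σ R) :
    (aeval g p).eval t = eval (fun k => (g k).eval t) p := by
  induction p using MvPolynomial.induction_on <;> simp_all

end MvPolynomial

theorem Continuous.integrableOn_Icc_prod_Icc {h : ℝ × ℝ → ℝ} (hh : Continuous h)
    (x₀ x₁ y₀ y₁ : ℝ) : IntegrableOn h (Set.Icc x₀ x₁ ×ˢ Set.Icc y₀ y₁) :=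
  hh.continuousOn.integrableOn_compact (isCompact_Icc.prod isCompact_Icc)

open Set in
theorem integral_fderiv_mul_prod_Icc {w f g : ℝ × ℝ → ℝ} (hw : ContDiff ℝ 1 w)
    (hf : ContDiff ℝ 1 f) (hg : ContDiff ℝ 1 g) {x₀ x₁ y₀ y₁ : ℝ} (hx : x₀ ≤ x₁) (hy : y₀ ≤ y₁) :
    ∫ z in Icc x₀ x₁ ×ˢ Icc y₀ y₁, (fderiv ℝ w z (1, 0) * f z + fderiv ℝ w z (0, 1) * g z) =
      -(∫ z in Icc x₀ x₁ ×ˢ Icc y₀ y₁, w z * (fderiv ℝ f z (1, 0) + fderiv ℝ g z (0, 1))) +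
        ((∫ y in y₀..y₁, w (x₀, y) * -f (x₀, y)) + (∫ y in y₀..y₁, w (x₁, y) * f (x₁, y)) +
          (∫ x in x₀..x₁, w (x, y₀) * -g (x, y₀)) + ∫ x in x₀..x₁, w (x, y₁) * g (x, y₁)) := by
  have hD : ∀ {h : ℝ × ℝ → ℝ}, ContDiff ℝ 1 h → ∀ z, HasFDerivAt h (fderiv ℝ h z) z :=
    fun hh z => (hh.differentiable one_ne_zero z).hasFDerivAt
  have hfc := hf.continuous
  have hgc := hg.continuous
  have hwc := hw.continuous
  have hdfc := hf.continuous_fderiv one_ne_zero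
  have hdgc := hg.continuous_fderiv one_ne_zero
  have hdwc := hw.continuous_fderiv one_ne_zero
  have hgrad : IntegrableOn
      (fun z => fderiv ℝ w z (1, 0) * f z + fderiv ℝ w z (0, 1) * g z) (Icc x₀ x₁ ×ˢ Icc y₀ y₁) :=
    Continuous.integrableOn_Icc_prod_Icc (by fun_prop) ..
  have hdiv : IntegrableOn (fun z => w z * (fderiv ℝ f z (1, 0) + fderiv ℝ g z (0, 1)))
      (Icc x₀ x₁ ×ˢ Icc y₀ y₁) :=
    Continuous.integrableOn_Icc_prod_Icc (by fun_prop) ..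
  have hsplit : (fun z => (w z • fderiv ℝ f z + f z • fderiv ℝ w z) (1, 0)
      + (w z • fderiv ℝ g z + g z • fderiv ℝ w z) (0, 1)) = fun z =>
      (fderiv ℝ w z (1, 0) * f z + fderiv ℝ w z (0, 1) * g z)
        + w z * (fderiv ℝ f z (1, 0) + fderiv ℝ g z (0, 1)) := by
    ext z
    simp only [add_apply, smul_apply, smul_eq_mul]
    ring
  have green := integral_divergence_prod_Icc_of_hasFDerivAt_of_le (fun z => w z * f z)
    (fun z => w z * g z) (fun z => w z • fderiv ℝ f z + f z • fderiv ℝ w z)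
    (fun z => w z • fderiv ℝ g z + g z • fderiv ℝ w z) (x₀, y₀) (x₁, y₁) ⟨hx, hy⟩
    (hwc.mul hfc).continuousOn (hwc.mul hgc).continuousOn
    (fun z _ => (hD hw z).mul (hD hf z)) (fun z _ => (hD hw z).mul (hD hg z))
    (by rw [hsplit, ← Icc_prod_Icc]; exact hgrad.add hdiv)
  rw [hsplit, ← Icc_prod_Icc, integral_add hgrad hdiv] at green
  simp only [mul_neg, intervalIntegral.integral_neg]
  linarith

theorem integral_mul_eq_of_forall_integral_sub_mul_eq_zero {a b : ℝ} {n : ℕ} {f : ℝ → ℝ}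
    (hf : Continuous f) {u : Polynomial ℝ}
    (hu : ∀ p : Polynomial ℝ, p.natDegree ≤ n → ∫ x in a..b, (f x - u.eval x) * p.eval x = 0)
    {r : ℝ → ℝ} (hr : ∃ p : Polynomial ℝ, p.natDegree ≤ n ∧ ∀ x, p.eval x = r x) :
    ∫ x in a..b, f x * r x = ∫ x in a..b, u.eval x * r x := by
  obtain ⟨p, hp, hpr⟩ := hr
  simp only [← hpr]
  rw [← sub_eq_zero, ← intervalIntegral.integral_sub (f := fun x => f x * p.eval x)
    (g := fun x => u.eval x * p.eval x) ((hf.mul p.continuous).intervalIntegrable _ _)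
    ((u.continuous.mul p.continuous).intervalIntegrable _ _)]
  simpa only [sub_mul] using hu p hp

section evalP

variable (p q : Poly2) (x y : ℝ)

@[simp] theorem evalP_zero : evalP 0 x y = 0 := by simp [evalP]
@[simp] theorem evalP_C (a : ℝ) : evalP (C a) x y = a := by simp [evalP]
@[simp] theorem evalP_add : evalP (p + q) x y = evalP p x y + evalP q x y := by simp [evalP]
@[simp] theorem evalP_mul : evalP (p * q) x y = evalP p x y * evalP q x y := by simp [evalP]
@[simp] theorem evalP_X_zero : evalP (X 0) x y = x := by simp [evalP]
@[simp] theorem evalP_X_one : evalP (X 1) x y = y := by simp [evalP]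

end evalP

theorem hasFDerivAt_evalP (p : Poly2) (z : ℝ × ℝ) :
    HasFDerivAt (fun z : ℝ × ℝ => evalP p z.1 z.2)
      (evalP (pderiv 0 p) z.1 z.2 • ContinuousLinearMap.fst ℝ ℝ ℝ
        + evalP (pderiv 1 p) z.1 z.2 • ContinuousLinearMap.snd ℝ ℝ ℝ) z := by
  induction p using MvPolynomial.induction_on with
  | C a => simpa using hasFDerivAt_const (𝕜 := ℝ) a z
  | add p q hp hq =>
      simp only [evalP_add, map_add]
      refine (hp.add hq).congr_fderiv ?_
      ext <;> simp
  | mul_X p i hp =>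
      fin_cases i <;>
        simp only [Fin.zero_eta, Fin.mk_one, Fin.isValue, evalP_mul, evalP_X_zero, evalP_X_one]
      · refine (hp.mul hasFDerivAt_fst).congr_fderiv ?_
        ext <;> simp
      · refine (hp.mul hasFDerivAt_snd).congr_fderiv ?_
        ext <;> simp

theorem contDiff_evalP (p : Poly2) {n : WithTop ℕ∞} :
    ContDiff ℝ n fun z : ℝ × ℝ => evalP p z.1 z.2 := by
  induction p using MvPolynomial.induction_on with
  | C a => simpa using contDiff_const
  | add p q hp hq => simpa using hp.add hq
  | mul_X p i hp =>
      fin_cases i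
      · simpa using hp.mul contDiff_fst
      · simpa using hp.mul contDiff_snd

@[fun_prop]
theorem continuous_evalP (p : Poly2) : Continuous fun z : ℝ × ℝ => evalP p z.1 z.2 :=
  (contDiff_evalP p (n := 0)).continuous

theorem fderiv_evalP_add_fderiv_evalP (q : Poly2 × Poly2) (z : ℝ × ℝ) :
    fderiv ℝ (fun z : ℝ × ℝ => evalP q.1 z.1 z.2) z (1, 0)
      + fderiv ℝ (fun z : ℝ × ℝ => evalP q.2 z.1 z.2) z (0, 1) = evalP (divP q) z.1 z.2 := by
  simp [(hasFDerivAt_evalP _ z).fderiv, divP]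

theorem exists_natDegree_le_eval_eq_evalP_left (p : Poly2) (c : ℝ) :
    ∃ r : Polynomial ℝ, r.natDegree ≤ p.degreeOf 1 ∧ ∀ t, r.eval t = evalP p c t := by
  refine ⟨aeval ![Polynomial.C c, Polynomial.X] p,
    natDegree_aeval_le_degreeOf 1 _ (by simp) (fun k hk => ?_) p, fun t => ?_⟩
  · fin_cases k <;> simp_all
  · have hg : (fun k => (![Polynomial.C c, Polynomial.X] k).eval t) = ![c, t] := by
      ext k
      fin_cases k <;> simp
    rw [polynomial_eval_aeval, hg, evalP]

theorem exists_natDegree_le_eval_eq_evalP_right (p : Poly2) (c : ℝ) :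
    ∃ r : Polynomial ℝ, r.natDegree ≤ p.degreeOf 0 ∧ ∀ t, r.eval t = evalP p t c := by
  refine ⟨aeval ![Polynomial.X, Polynomial.C c] p,
    natDegree_aeval_le_degreeOf 0 _ (by simp) (fun k hk => ?_) p, fun t => ?_⟩
  · fin_cases k <;> simp_all
  · have hg : (fun k => (![Polynomial.X, Polynomial.C c] k).eval t) = ![t, c] := by
      ext k
      fin_cases k <;> simp
    rw [polynomial_eval_aeval, hg, evalP]

theorem divP_curlP (φ : Poly2) : divP (curlP φ) = 0 := by
  simp [divP, curlP, pderiv_pderiv_comm (0 : Fin 2) 1]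

theorem memBDM.memP_divP {j : ℕ} {q : Poly2 × Poly2} (hq : memBDM j q) : memP j (divP q) := by
  obtain ⟨p₁, p₂, a, b, h₁, h₂, e₁, e₂⟩ := hq
  have hdiv : divP q = pderiv 0 p₁ + pderiv 1 p₂ + a • divP (curlP (X 0 ^ (j+2) * X 1))
      + b • divP (curlP (X 0 * X 1 ^ (j+2))) := by
    simp only [divP, e₁, e₂, map_add, Derivation.map_smul, smul_add]
    abel
  rw [hdiv, divP_curlP, divP_curlP, smul_zero, smul_zero, add_zero, add_zero]
  refine (totalDegree_add _ _).trans (max_le ?_ ?_)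
  · exact (totalDegree_pderiv_le 0 p₁).trans (Nat.sub_le_of_le_add h₁)
  · exact (totalDegree_pderiv_le 1 p₂).trans (Nat.sub_le_of_le_add h₂)

theorem memBDM.degreeOf_fst_le {j : ℕ} {q : Poly2 × Poly2} (hq : memBDM j q) :
    q.1.degreeOf 1 ≤ j + 1 := by
  obtain ⟨p₁, -, a, b, h₁, -, e₁, -⟩ := hq
  have hφ₁ : (X 0 ^ (j+2) * X 1 : Poly2).degreeOf 1 ≤ 1 :=
    (degreeOf_mul_le _ _ _).trans (by simp [degreeOf_X_pow_of_ne])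
  have hφ₂ : (X 0 * X 1 ^ (j+2) : Poly2).degreeOf 1 ≤ j + 2 :=
    (degreeOf_mul_le _ _ _).trans (by simp [degreeOf_X_of_ne])
  rw [e₁]
  refine (degreeOf_add_le _ _ _).trans (max_le ((degreeOf_add_le _ _ _).trans (max_le
    ((degreeOf_le_totalDegree _ _).trans h₁) ?_)) ?_) <;>
    refine (degreeOf_smul_le _ _ _).trans ?_ <;>
    rw [curlP, degreeOf_neg] <;>
    refine (degreeOf_pderiv_le _ _).trans ?_ <;> omega

theorem memBDM.degreeOf_snd_le {j : ℕ} {q : Poly2 × Poly2} (hq : memBDM j q) :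
    q.2.degreeOf 0 ≤ j + 1 := by
  obtain ⟨-, p₂, a, b, -, h₂, -, e₂⟩ := hq
  have hφ₁ : (X 0 ^ (j+2) * X 1 : Poly2).degreeOf 0 ≤ j + 2 :=
    (degreeOf_mul_le _ _ _).trans (by simp [degreeOf_X_of_ne])
  have hφ₂ : (X 0 * X 1 ^ (j+2) : Poly2).degreeOf 0 ≤ 1 :=
    (degreeOf_mul_le _ _ _).trans (by simp [degreeOf_X_pow_of_ne])
  rw [e₂]
  refine (degreeOf_add_le _ _ _).trans (max_le ((degreeOf_add_le _ _ _).trans (max_le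
    ((degreeOf_le_totalDegree _ _).trans h₂) ?_)) ?_) <;>
    refine (degreeOf_smul_le _ _ _).trans ?_ <;>
    rw [curlP] <;>
    refine (degreeOf_pderiv_le _ _).trans ?_ <;> omega

theorem memBDM.exists_eval_eq_evalP_fst {j : ℕ} {q : Poly2 × Poly2} (hq : memBDM j q) (c : ℝ) :
    ∃ p : Polynomial ℝ, p.natDegree ≤ j + 1 ∧ ∀ t, p.eval t = evalP q.1 c t :=
  let ⟨p, hp, hpq⟩ := exists_natDegree_le_eval_eq_evalP_left q.1 c
  ⟨p, hp.trans hq.degreeOf_fst_le, hpq⟩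

theorem memBDM.exists_eval_eq_evalP_snd {j : ℕ} {q : Poly2 × Poly2} (hq : memBDM j q) (c : ℝ) :
    ∃ p : Polynomial ℝ, p.natDegree ≤ j + 1 ∧ ∀ t, p.eval t = evalP q.2 t c :=
  let ⟨p, hp, hpq⟩ := exists_natDegree_le_eval_eq_evalP_right q.2 c
  ⟨p, hp.trans hq.degreeOf_snd_le, hpq⟩

theorem statement3_general (j : ℕ) (x₀ x₁ y₀ y₁ : ℝ) (hx : x₀ < x₁) (hy : y₀ < y₁)
    (w : ℝ × ℝ → ℝ) (hw : ContDiff ℝ 1 w)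
    (u₀ : Poly2)
    (hu₀proj : ∀ p : Poly2, memP j p →
      (∫ z in Set.Icc x₀ x₁ ×ˢ Set.Icc y₀ y₁, (w z - evalP u₀ z.1 z.2) * evalP p z.1 z.2) = 0)
    (ub₁ ub₂ ub₃ ub₄ : Polynomial ℝ)
    (hub₁ : ∀ p : Polynomial ℝ, p.natDegree ≤ j + 1 →
      (∫ y in y₀..y₁, (w (x₀, y) - ub₁.eval y) * p.eval y) = 0)
    (hub₂ : ∀ p : Polynomial ℝ, p.natDegree ≤ j + 1 →
      (∫ y in y₀..y₁, (w (x₁, y) - ub₂.eval y) * p.eval y) = 0)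
    (hub₃ : ∀ p : Polynomial ℝ, p.natDegree ≤ j + 1 →
      (∫ x in x₀..x₁, (w (x, y₀) - ub₃.eval x) * p.eval x) = 0)
    (hub₄ : ∀ p : Polynomial ℝ, p.natDegree ≤ j + 1 →
      (∫ x in x₀..x₁, (w (x, y₁) - ub₄.eval x) * p.eval x) = 0)
    (G : Poly2 × Poly2)
    (hGdef : ∀ q : Poly2 × Poly2, memBDM j q →
      (∫ z in Set.Icc x₀ x₁ ×ˢ Set.Icc y₀ y₁,
        (evalP G.1 z.1 z.2 * evalP q.1 z.1 z.2 + evalP G.2 z.1 z.2 * evalP q.2 z.1 z.2))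
      = -(∫ z in Set.Icc x₀ x₁ ×ˢ Set.Icc y₀ y₁, evalP u₀ z.1 z.2 * evalP (divP q) z.1 z.2)
        + ((∫ y in y₀..y₁, ub₁.eval y * (-(evalP q.1 x₀ y)))
          + (∫ y in y₀..y₁, ub₂.eval y * evalP q.1 x₁ y)
          + (∫ x in x₀..x₁, ub₃.eval x * (-(evalP q.2 x y₀)))
          + (∫ x in x₀..x₁, ub₄.eval x * evalP q.2 x y₁))) :
    ∀ q : Poly2 × Poly2, memBDM j q →
      (∫ z in Set.Icc x₀ x₁ ×ˢ Set.Icc y₀ y₁,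
        ((evalP G.1 z.1 z.2 - fderiv ℝ w z (1, 0)) * evalP q.1 z.1 z.2
          + (evalP G.2 z.1 z.2 - fderiv ℝ w z (0, 1)) * evalP q.2 z.1 z.2)) = 0 := by
  intro q hq
  have hwc := hw.continuous
  have hdwc := hw.continuous_fderiv one_ne_zero
  have green := integral_fderiv_mul_prod_Icc hw (contDiff_evalP q.1) (contDiff_evalP q.2)
    hx.le hy.le
  simp only [fderiv_evalP_add_fderiv_evalP] at green
  have hdiv : ∫ z in Set.Icc x₀ x₁ ×ˢ Set.Icc y₀ y₁, w z * evalP (divP q) z.1 z.2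
      = ∫ z in Set.Icc x₀ x₁ ×ˢ Set.Icc y₀ y₁, evalP u₀ z.1 z.2 * evalP (divP q) z.1 z.2 := by
    rw [← sub_eq_zero, ← integral_sub]
    · simpa only [sub_mul] using hu₀proj _ hq.memP_divP
    all_goals exact Continuous.integrableOn_Icc_prod_Icc (by fun_prop) ..
  have hw₁ := integral_mul_eq_of_forall_integral_sub_mul_eq_zero (f := fun y => w (x₀, y))
    (by fun_prop) hub₁ (hq.exists_eval_eq_evalP_fst x₀)
  have hw₂ := integral_mul_eq_of_forall_integral_sub_mul_eq_zero (f := fun y => w (x₁, y))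
    (by fun_prop) hub₂ (hq.exists_eval_eq_evalP_fst x₁)
  have hw₃ := integral_mul_eq_of_forall_integral_sub_mul_eq_zero (f := fun x => w (x, y₀))
    (by fun_prop) hub₃ (hq.exists_eval_eq_evalP_snd y₀)
  have hw₄ := integral_mul_eq_of_forall_integral_sub_mul_eq_zero (f := fun x => w (x, y₁))
    (by fun_prop) hub₄ (hq.exists_eval_eq_evalP_snd y₁)
  simp only [sub_mul, ← add_sub_add_comm]
  rw [integral_sub, hGdef q hq, green, hdiv]
  · simp only [mul_neg, intervalIntegral.integral_neg, hw₁, hw₂, hw₃, hw₄, sub_self]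
  all_goals exact Continuous.integrableOn_Icc_prod_Icc (by fun_prop) ..

/-- If `u₀` is the `L²(K)`-projection of `w` onto `P_j`, each `u_{b,m}` is the
`L²(F_m)`-projection of `w` onto polynomials of degree `≤ j+1` on the edge `F_m`, and
`G ∈ BDM_{j+1}(K)` is the associated discrete weak gradient, then `G` is the `L²`-projection
of `∇w` onto `BDM_{j+1}(K)`. -/
theorem statement3 (j : ℕ) (x₀ x₁ y₀ y₁ : ℝ) (hx : x₀ < x₁) (hy : y₀ < y₁)
    (w : ℝ × ℝ → ℝ) (hw : ContDiff ℝ 1 w)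
    (u₀ : Poly2) (hu₀ : memP j u₀)
    (hu₀proj : ∀ p : Poly2, memP j p →
      (∫ z in Set.Icc x₀ x₁ ×ˢ Set.Icc y₀ y₁, (w z - evalP u₀ z.1 z.2) * evalP p z.1 z.2) = 0)
    (ub₁ ub₂ ub₃ ub₄ : Polynomial ℝ)
    (hb₁ : ub₁.natDegree ≤ j + 1) (hb₂ : ub₂.natDegree ≤ j + 1)
    (hb₃ : ub₃.natDegree ≤ j + 1) (hb₄ : ub₄.natDegree ≤ j + 1)
    (hub₁ : ∀ p : Polynomial ℝ, p.natDegree ≤ j + 1 →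
      (∫ y in y₀..y₁, (w (x₀, y) - ub₁.eval y) * p.eval y) = 0)
    (hub₂ : ∀ p : Polynomial ℝ, p.natDegree ≤ j + 1 →
      (∫ y in y₀..y₁, (w (x₁, y) - ub₂.eval y) * p.eval y) = 0)
    (hub₃ : ∀ p : Polynomial ℝ, p.natDegree ≤ j + 1 →
      (∫ x in x₀..x₁, (w (x, y₀) - ub₃.eval x) * p.eval x) = 0)
    (hub₄ : ∀ p : Polynomial ℝ, p.natDegree ≤ j + 1 →
      (∫ x in x₀..x₁, (w (x, y₁) - ub₄.eval x) * p.eval x) = 0)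
    (G : Poly2 × Poly2) (hG : memBDM j G)
    (hGdef : ∀ q : Poly2 × Poly2, memBDM j q →
      (∫ z in Set.Icc x₀ x₁ ×ˢ Set.Icc y₀ y₁,
        (evalP G.1 z.1 z.2 * evalP q.1 z.1 z.2 + evalP G.2 z.1 z.2 * evalP q.2 z.1 z.2))
      = -(∫ z in Set.Icc x₀ x₁ ×ˢ Set.Icc y₀ y₁, evalP u₀ z.1 z.2 * evalP (divP q) z.1 z.2)
        + ((∫ y in y₀..y₁, ub₁.eval y * (-(evalP q.1 x₀ y)))
          + (∫ y in y₀..y₁, ub₂.eval y * evalP q.1 x₁ y)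
          + (∫ x in x₀..x₁, ub₃.eval x * (-(evalP q.2 x y₀)))
          + (∫ x in x₀..x₁, ub₄.eval x * evalP q.2 x y₁))) :
    ∀ q : Poly2 × Poly2, memBDM j q →
      (∫ z in Set.Icc x₀ x₁ ×ˢ Set.Icc y₀ y₁,
        ((evalP G.1 z.1 z.2 - fderiv ℝ w z (1, 0)) * evalP q.1 z.1 z.2
          + (evalP G.2 z.1 z.2 - fderiv ℝ w z (0, 1)) * evalP q.2 z.1 z.2)) = 0 :=
  statement3_general j x₀ x₁ y₀ y₁ hx hy w hw u₀ hu₀proj ub₁ ub₂ ub₃ ub₄ hub₁ hub₂ hub₃ hub₄ G hGdef
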